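/- For any frame F = ⟨W, π⟩ with π an uncertainty measure: F validates the formula disj0^N, i.e., △^N~_N Cp ⇀ △^N(Cp' ⇋ C(p∨p')) (where α ⇋ β abbreviates (α⇀β)∧(β⇀α)), if and only if for all Y, Y' ⊆ W: π(Y) = 0 implies π(Y∪Y') = π(Y'). -/

import Mathlib

/-!
`△^N` only takes the values `0` and `1`, so `disj0^N` has value `1` in a model iff
`π|p|⁺ = 0` forces `e1(Cp' ⇋ C(p∨p')) = 1`. Since `π ≤ 1`, a Gödel implication `a →_G b`
with `a ≤ 1` is `1` only when `a ≤ b`, so this means `π|p'|⁺ = π(|p|⁺ ∪ |p'|⁺)`.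
Valuating `p, p'` by arbitrary `Y, Y'` gives the frame condition.
-/

/-- Formulas of Belnap–Dunn logic. -/
inductive BDForm : Type
  | atom : ℕ → BDForm
  | neg  : BDForm → BDForm
  | and  : BDForm → BDForm → BDForm
  | or   : BDForm → BDForm → BDForm

/-- Frame semantics of BD: positive and negative extensions `(|φ|⁺, |φ|⁻)` of a
formula in a BD model `⟨W, v⁺, v⁻⟩`. -/
def BDsem {W : Type} (vp vm : ℕ → Set W) : BDForm → Set W × Set W
  | .atom n => (vp n, vm n)
  | .neg φ => ((BDsem vp vm φ).2, (BDsem vp vm φ).1)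
  | .and φ ψ => ((BDsem vp vm φ).1 ∩ (BDsem vp vm ψ).1, (BDsem vp vm φ).2 ∪ (BDsem vp vm ψ).2)
  | .or φ ψ => ((BDsem vp vm φ).1 ∪ (BDsem vp vm ψ).1, (BDsem vp vm φ).2 ∩ (BDsem vp vm ψ).2)

/-- The sequent `φ ⊢ χ` is BD-valid: on every BD model, positive support of `φ`
implies positive support of `χ` and negative support of `χ` implies negative
support of `φ`. -/
def BDValid (φ χ : BDForm) : Prop :=
  ∀ (W : Type) (_ : Nonempty W) (vp vm : ℕ → Set W),
    (BDsem vp vm φ).1 ⊆ (BDsem vp vm χ).1 ∧ (BDsem vp vm χ).2 ⊆ (BDsem vp vm φ).2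

/-- Gödel implication on `[0,1] ⊆ ℝ`. -/
noncomputable def gimp (a b : ℝ) : ℝ := if a ≤ b then 1 else b

/-- Gödel co-implication on `[0,1] ⊆ ℝ`. -/
noncomputable def gcoimp (a b : ℝ) : ℝ := if a ≤ b then 0 else a

/-- `μ` is an uncertainty measure on `W`: `[0,1]`-valued, monotone w.r.t. `⊆`,
and `μ(W) > μ(∅)`. -/
def IsUncertainty {W : Type} (μ : Set W → ℝ) : Prop :=
  (∀ X : Set W, μ X ∈ Set.Icc (0:ℝ) 1) ∧ Monotone μ ∧ μ ∅ < μ Set.univ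

/-- Formulas of the language `L_NMCB`: atoms `Cφ` for BD formulas `φ`, closed under
`¬`, `∧`, `∨`, `⇀`, `⤚` (here `imp` is `⇀` and `coimp` is `⤚`). -/
inductive NMCBForm : Type
  | cert  : BDForm → NMCBForm
  | neg   : NMCBForm → NMCBForm
  | and   : NMCBForm → NMCBForm → NMCBForm
  | or    : NMCBForm → NMCBForm → NMCBForm
  | imp   : NMCBForm → NMCBForm → NMCBForm
  | coimp : NMCBForm → NMCBForm → NMCBForm

/-- The valuation `(e1, e2)` of an NMCB model determined by a BD model `⟨W, v⁺, v⁻⟩`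
and an uncertainty measure `π`: `e1(Cφ) = π(|φ|⁺)`, `e2(Cφ) = π(|φ|⁻)`, with
compound formulas interpreted by the `G²(⇀,⤚)` operations. -/
noncomputable def nmcbEval {W : Type} (π : Set W → ℝ) (vp vm : ℕ → Set W) :
    NMCBForm → ℝ × ℝ
  | .cert φ => (π (BDsem vp vm φ).1, π (BDsem vp vm φ).2)
  | .neg α => ((nmcbEval π vp vm α).2, (nmcbEval π vp vm α).1)
  | .and α β => (min (nmcbEval π vp vm α).1 (nmcbEval π vp vm β).1,
                 max (nmcbEval π vp vm α).2 (nmcbEval π vp vm β).2)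
  | .or α β => (max (nmcbEval π vp vm α).1 (nmcbEval π vp vm β).1,
                min (nmcbEval π vp vm α).2 (nmcbEval π vp vm β).2)
  | .imp α β => (gimp (nmcbEval π vp vm α).1 (nmcbEval π vp vm β).1,
                 min (nmcbEval π vp vm β).1 (nmcbEval π vp vm α).2)
  | .coimp α β => (gcoimp (nmcbEval π vp vm α).1 (nmcbEval π vp vm β).1,
                   max (nmcbEval π vp vm α).2 (nmcbEval π vp vm β).1)

/-- `⊤_N` as `α ⇀ α` for an atomic `α`. -/
def nTop : NMCBForm := (NMCBForm.cert (BDForm.atom 0)).imp (NMCBForm.cert (BDForm.atom 0))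
/-- `⊥_N` as `α ⤚ α` for an atomic `α`. -/
def nBot : NMCBForm := (NMCBForm.cert (BDForm.atom 0)).coimp (NMCBForm.cert (BDForm.atom 0))
/-- Gödel negation `~_N α := α ⇀ ⊥_N`. -/
def nNot (α : NMCBForm) : NMCBForm := α.imp nBot
/-- `△^N α := ~_N(⊤_N ⤚ α)`. -/
def nDelta (α : NMCBForm) : NMCBForm := nNot (nTop.coimp α)
/-- `α ⇋ β := (α ⇀ β) ∧ (β ⇀ α)`. -/
def nIff (α β : NMCBForm) : NMCBForm := (α.imp β).and (β.imp α)

/-- Validity of an `L_NMCB` formula on a frame `⟨W, π⟩`: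
`e1(β) = 1` in every NMCB model on the frame. -/
def NMCBValidOnFrame {W : Type} (π : Set W → ℝ) (β : NMCBForm) : Prop :=
  ∀ vp vm : ℕ → Set W, (nmcbEval π vp vm β).1 = 1

/-- The BD atom `p`. -/
def pa : BDForm := BDForm.atom 0
/-- The BD atom `p'`. -/
def pb : BDForm := BDForm.atom 1

/-- The formula `disj0^N`: `△^N~_N Cp ⇀ △^N(Cp' ⇋ C(p∨p'))`. -/
def disjZeroN : NMCBForm :=
  (nDelta (nNot (NMCBForm.cert pa))).imp
    (nDelta (nIff (NMCBForm.cert pb) (NMCBForm.cert (pa.or pb))))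

theorem one_le_gimp_iff {a b : ℝ} (ha : a ≤ 1) : 1 ≤ gimp a b ↔ a ≤ b := by
  unfold gimp
  split_ifs with hab
  · simpa using hab
  · exact ⟨fun hb => (hab (ha.trans hb)).elim, fun h => (hab h).elim⟩

theorem gimp_ite_eq_one_iff (P Q : Prop) [Decidable P] [Decidable Q] :
    gimp (if P then 1 else 0) (if Q then 1 else 0) = 1 ↔ (P → Q) := by
  unfold gimp
  split_ifs <;> norm_num at * <;> tauto

section Eval

variable {W : Type} (π : Set W → ℝ) (vp vm : ℕ → Set W)

theorem nmcbEval_nNot_fst (α : NMCBForm) :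
    (nmcbEval π vp vm (nNot α)).1 = if (nmcbEval π vp vm α).1 ≤ 0 then 1 else 0 := by
  simp [nNot, nBot, nmcbEval, gimp, gcoimp]

theorem nmcbEval_nDelta_fst (α : NMCBForm) :
    (nmcbEval π vp vm (nDelta α)).1 = if 1 ≤ (nmcbEval π vp vm α).1 then 1 else 0 := by
  rw [nDelta, nmcbEval_nNot_fst]
  simp only [nmcbEval, nTop, gimp, gcoimp, le_refl, if_true]
  split_ifs <;> norm_num at *

theorem one_le_nmcbEval_nNot_fst_iff (α : NMCBForm) :
    1 ≤ (nmcbEval π vp vm (nNot α)).1 ↔ (nmcbEval π vp vm α).1 ≤ 0 := by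
  rw [nmcbEval_nNot_fst]
  split_ifs with h
  · simpa using h
  · exact iff_of_false (by norm_num) h

theorem one_le_nmcbEval_nIff_fst_iff {α β : NMCBForm}
    (hα : (nmcbEval π vp vm α).1 ≤ 1) (hβ : (nmcbEval π vp vm β).1 ≤ 1) :
    1 ≤ (nmcbEval π vp vm (nIff α β)).1 ↔ (nmcbEval π vp vm α).1 = (nmcbEval π vp vm β).1 := by
  simp only [nIff, nmcbEval, le_min_iff, one_le_gimp_iff hα, one_le_gimp_iff hβ]
  exact le_antisymm_iff.symm

theorem nmcbEval_imp_nDelta_fst_eq_one_iff (α β : NMCBForm) :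
    (nmcbEval π vp vm ((nDelta α).imp (nDelta β))).1 = 1 ↔
      (1 ≤ (nmcbEval π vp vm α).1 → 1 ≤ (nmcbEval π vp vm β).1) := by
  simp only [nmcbEval]
  rw [nmcbEval_nDelta_fst, nmcbEval_nDelta_fst]
  exact gimp_ite_eq_one_iff _ _

theorem nmcbEval_disjZeroN_fst_eq_one_iff (hπ : ∀ X, π X ≤ 1) :
    (nmcbEval π vp vm disjZeroN).1 = 1 ↔
      (π (vp 0) ≤ 0 → π (vp 1) = π (vp 0 ∪ vp 1)) := by
  rw [disjZeroN, nmcbEval_imp_nDelta_fst_eq_one_iff, one_le_nmcbEval_nNot_fst_iff,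
    one_le_nmcbEval_nIff_fst_iff π vp vm (α := .cert pb) (β := .cert (pa.or pb)) (hπ _) (hπ _)]
  rfl

end Eval

theorem disjZeroN_correspondence_general (W : Type) (π : Set W → ℝ)
    (hπ : IsUncertainty π) :
    NMCBValidOnFrame π disjZeroN ↔
      ∀ Y Y' : Set W, π Y = 0 → π (Y ∪ Y') = π Y' := by
  have hle : ∀ X, π X ≤ 1 := fun X => (hπ.1 X).2
  constructor
  · intro hvalid Y Y' hY
    have hmodel := (nmcbEval_disjZeroN_fst_eq_one_iff π (fun n => if n = 0 then Y else Y')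
      (fun _ => ∅) hle).1 (hvalid _ _) hY.le
    simpa using hmodel.symm
  · intro h vp vm
    refine (nmcbEval_disjZeroN_fst_eq_one_iff π vp vm hle).2 fun h0 => ?_
    exact (h _ _ (le_antisymm h0 (hπ.1 _).1)).symm

/-- a frame `⟨W, π⟩` validates `disj0^N` iff for all `Y, Y' ⊆ W`:
`π(Y) = 0` implies `π(Y∪Y') = π(Y')`. -/
theorem disjZeroN_correspondence (W : Type) (_ : Nonempty W) (π : Set W → ℝ)
    (hπ : IsUncertainty π) :
    NMCBValidOnFrame π disjZeroN ↔
      ∀ Y Y' : Set W, π Y = 0 → π (Y ∪ Y') = π Y' :=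
  disjZeroN_correspondence_general W π hπ
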